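/- Let G be a finite simple undirected graph on n ≥ 3 vertices with at least one edge in which every vertex has degree at least 1. Then the local leverage satisfies μ_L/μ_D ≤ ((n−1)² + 1)/(2(n−1)), and equality holds for the star graph K_{1,n−1}. Hence no graph on n vertices with minimum degree at least 1 has higher local leverage than the star network. -/

import Mathlib

open Finset

variable {V : Type*}

/-- Set of neighbors of `v` as a `Finset` (classical). -/
noncomputable def nbr (G : SimpleGraph V) [Fintype V] (v : V) : Finset V :=
  haveI := Classical.decRel G.Adj
  G.neighborFinset v

/-- Degree of vertex `v`: number of its neighbors. -/
noncomputable def deg (G : SimpleGraph V) [Fintype V] (v : V) : ℕ :=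
  (nbr G v).card

/-- Average degree of the friends of `v`. -/
noncomputable def friendAvg (G : SimpleGraph V) [Fintype V] (v : V) : ℝ :=
  (∑ j ∈ nbr G v, (deg G j : ℝ)) / (deg G v : ℝ)

/-- Mean degree of the network. -/
noncomputable def meanDeg (G : SimpleGraph V) [Fintype V] : ℝ :=
  (∑ i : V, (deg G i : ℝ)) / (Fintype.card V : ℝ)

/-- Local mean: average over vertices of the average friend degree. -/
noncomputable def localMean (G : SimpleGraph V) [Fintype V] : ℝ :=
  (∑ i : V, friendAvg G i) / (Fintype.card V : ℝ)

/-- Global mean: total number of friends of friends over total number of friends. -/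
noncomputable def globalMean (G : SimpleGraph V) [Fintype V] : ℝ :=
  (∑ i : V, ∑ j ∈ nbr G i, (deg G j : ℝ)) / (∑ i : V, (deg G i : ℝ))

/-- Number of (undirected) edges. -/
noncomputable def edgeCount (G : SimpleGraph V) [Fintype V] : ℕ :=
  Nat.card G.edgeSet

/-- m-th moment of the degree distribution. -/
noncomputable def kappa (G : SimpleGraph V) [Fintype V] (m : ℤ) : ℝ :=
  (∑ i : V, (deg G i : ℝ) ^ m) / (Fintype.card V : ℝ)

/-- The star graph on `Fin n`: the center is `0`, adjacent to every other vertex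
(the leaves), with no other edges. -/
def starGraph (n : ℕ) : SimpleGraph (Fin n) where
  Adj i j := i ≠ j ∧ (i.val = 0 ∨ j.val = 0)
  symm := ⟨fun i j ⟨h1, h2⟩ => ⟨h1.symm, h2.symm⟩⟩
  loopless := ⟨fun i ⟨h1, _⟩ => h1 rfl⟩

/-!
Writing `Σ_i F_i = Σ_{i ~ j} D_j / D_i` over ordered adjacent pairs and symmetrising gives
`2 Σ_i F_i = Σ_{i ~ j} (D_j / D_i + D_i / D_j)`. All degrees lie in `[1, n - 1]`, where
`x / y + y / x ≤ (n - 1) + 1 / (n - 1)`, and there are `Σ_i D_i` ordered pairs, so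
`μ_L / μ_D = Σ_i F_i / Σ_i D_i ≤ ((n - 1) + 1 / (n - 1)) / 2`. In the star every pair joins the
centre (degree `n - 1`) to a leaf (degree `1`), so each term attains the bound.
-/

lemma mem_nbr (G : SimpleGraph V) [Fintype V] {i j : V} : j ∈ nbr G i ↔ G.Adj i j := by
  simp [nbr]

lemma deg_lt_card (G : SimpleGraph V) [Fintype V] (v : V) : deg G v < Fintype.card V :=
  @SimpleGraph.degree_lt_card_verts _ G _ (Classical.decRel _) v

lemma sum_nbr_comm (G : SimpleGraph V) [Fintype V] (f : V → V → ℝ) :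
    ∑ i, ∑ j ∈ nbr G i, f i j = ∑ i, ∑ j ∈ nbr G i, f j i := by
  classical
  have hfilter : ∀ i, nbr G i = univ.filter (G.Adj i) := fun i => by ext; simp [mem_nbr]
  simp only [hfilter, sum_filter]
  rw [sum_comm]
  exact sum_congr rfl fun i _ => sum_congr rfl fun j _ => by rw [G.adj_comm]

lemma div_add_div_le_add_inv {x y K : ℝ} (hx : 1 ≤ x) (hxK : x ≤ K) (hy : 1 ≤ y)
    (hyK : y ≤ K) : x / y + y / x ≤ K + K⁻¹ := by
  have hx0 : 0 < x := by linarith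
  have hy0 : 0 < y := by linarith
  have hK0 : 0 < K := by linarith
  have hgap : K + K⁻¹ - (x / y + y / x) = (K * x - y) * (K * y - x) / (K * x * y) := by
    field_simp
    ring
  have : 0 ≤ (K * x - y) * (K * y - x) / (K * x * y) :=
    div_nonneg (mul_nonneg (by nlinarith) (by nlinarith)) (by positivity)
  linarith

lemma localMean_div_meanDeg (G : SimpleGraph V) [Fintype V] [Nonempty V] :
    localMean G / meanDeg G = (∑ i, friendAvg G i) / ∑ i, (deg G i : ℝ) :=
  div_div_div_cancel_right₀ (by positivity) _ _

lemma two_mul_sum_friendAvg (G : SimpleGraph V) [Fintype V] :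
    2 * ∑ i, friendAvg G i =
      ∑ i, ∑ j ∈ nbr G i, ((deg G j : ℝ) / deg G i + (deg G i : ℝ) / deg G j) := by
  have h : ∑ i, friendAvg G i = ∑ i, ∑ j ∈ nbr G i, (deg G j : ℝ) / deg G i :=
    sum_congr rfl fun i _ => by rw [friendAvg, sum_div]
  simp only [sum_add_distrib]
  rw [← sum_nbr_comm G fun i j => (deg G j : ℝ) / deg G i, ← h, two_mul]

lemma two_mul_sum_friendAvg_le (G : SimpleGraph V) [Fintype V] {K : ℝ}
    (hdeg : ∀ v, 1 ≤ deg G v) (hK : ∀ v, (deg G v : ℝ) ≤ K) :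
    2 * ∑ i, friendAvg G i ≤ (K + K⁻¹) * ∑ i, (deg G i : ℝ) := by
  have hdeg' : ∀ v, (1 : ℝ) ≤ deg G v := fun v => by exact_mod_cast hdeg v
  rw [two_mul_sum_friendAvg, mul_sum]
  refine sum_le_sum fun i _ => ?_
  calc ∑ j ∈ nbr G i, ((deg G j : ℝ) / deg G i + (deg G i : ℝ) / deg G j)
      ≤ ∑ _j ∈ nbr G i, (K + K⁻¹) :=
        sum_le_sum fun j _ => div_add_div_le_add_inv (hdeg' j) (hK j) (hdeg' i) (hK i)
    _ = (K + K⁻¹) * deg G i := by rw [sum_const, nsmul_eq_mul, mul_comm]; rfl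

lemma localMean_div_meanDeg_le (G : SimpleGraph V) [Fintype V] [Nonempty V]
    (hdeg : ∀ v, 1 ≤ deg G v) :
    localMean G / meanDeg G ≤
      (((Fintype.card V : ℝ) - 1) ^ 2 + 1) / (2 * ((Fintype.card V : ℝ) - 1)) := by
  set K : ℝ := Fintype.card V - 1
  have hK : ∀ v, (deg G v : ℝ) ≤ K := fun v => by
    have := deg_lt_card G v
    simp only [K, le_sub_iff_add_le]
    exact_mod_cast this
  have hKpos : 0 < K := by
    obtain ⟨v⟩ := ‹Nonempty V›
    have : (1 : ℝ) ≤ deg G v := by exact_mod_cast hdeg v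
    linarith [hK v]
  have hD : 0 < ∑ i, (deg G i : ℝ) :=
    sum_pos (fun i _ => by exact_mod_cast hdeg i) univ_nonempty
  have hbound := two_mul_sum_friendAvg_le G hdeg hK
  rw [localMean_div_meanDeg, div_le_div_iff₀ hD (by positivity)]
  have hK2 : K ^ 2 + 1 = (K + K⁻¹) * K := by field_simp
  rw [hK2]
  nlinarith [mul_le_mul_of_nonneg_right hbound hKpos.le]

lemma nbr_starGraph_zero (m : ℕ) : nbr (starGraph (m + 1)) 0 = univ.erase 0 := by
  ext j
  simp [mem_nbr, starGraph, eq_comm]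

lemma nbr_starGraph_succ (m : ℕ) (i : Fin m) : nbr (starGraph (m + 1)) i.succ = {0} := by
  ext j
  simp only [mem_nbr, starGraph, mem_singleton, Fin.val_succ]
  constructor
  · rintro ⟨-, h | h⟩
    · omega
    · exact Fin.ext h
  · rintro rfl
    exact ⟨Fin.succ_ne_zero i, Or.inr rfl⟩

lemma deg_starGraph_zero (m : ℕ) : deg (starGraph (m + 1)) 0 = m := by
  simp [deg, nbr_starGraph_zero]

lemma deg_starGraph_succ (m : ℕ) (i : Fin m) : deg (starGraph (m + 1)) i.succ = 1 := by
  simp [deg, nbr_starGraph_succ]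

lemma starGraph_localMean_div_meanDeg (m : ℕ) :
    localMean (starGraph (m + 1)) / meanDeg (starGraph (m + 1)) =
      ((m : ℝ) ^ 2 + 1) / (2 * m) := by
  -- `m / m` rather than `1`: for `m = 0` the centre is isolated and `friendAvg` is `0 / 0 = 0`.
  have hF0 : friendAvg (starGraph (m + 1)) 0 = (m : ℝ) / m := by
    rw [friendAvg, nbr_starGraph_zero, sum_erase_eq_sub (mem_univ _), Fin.sum_univ_succ]
    simp [deg_starGraph_succ, deg_starGraph_zero]
  have hF : ∀ i : Fin m, friendAvg (starGraph (m + 1)) i.succ = m := fun i => by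
    simp [friendAvg, nbr_starGraph_succ, deg_starGraph_succ, deg_starGraph_zero]
  rw [localMean_div_meanDeg, Fin.sum_univ_succ, Fin.sum_univ_succ, hF0]
  simp only [hF, deg_starGraph_zero, deg_starGraph_succ, sum_const, card_univ, Fintype.card_fin,
    nsmul_eq_mul, Nat.cast_one, mul_one]
  rcases eq_or_ne (m : ℝ) 0 with hm | hm
  · simp [hm]
  · field_simp
    ring

theorem stmt18_general {V : Type*} [Fintype V] (G : SimpleGraph V)
    (hn : 3 ≤ Fintype.card V) (hdeg : ∀ v : V, 1 ≤ deg G v) :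
    localMean G / meanDeg G ≤
        (((Fintype.card V : ℝ) - 1) ^ 2 + 1) / (2 * ((Fintype.card V : ℝ) - 1)) ∧
      ∀ n : ℕ, 3 ≤ n →
        localMean (starGraph n) / meanDeg (starGraph n)
          = (((n : ℝ) - 1) ^ 2 + 1) / (2 * ((n : ℝ) - 1)) := by
  have : Nonempty V := Fintype.card_pos_iff.mp (by omega)
  refine ⟨localMean_div_meanDeg_le G hdeg, fun n hn' => ?_⟩
  obtain ⟨m, rfl⟩ : ∃ m, n = m + 1 := ⟨n - 1, by omega⟩
  rw [starGraph_localMean_div_meanDeg]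
  push_cast
  ring_nf

/-- For any graph on `n ≥ 3` vertices with at least one edge and minimum degree at
least 1, the local leverage satisfies `μ_L/μ_D ≤ ((n-1)² + 1)/(2(n-1))`, and equality
holds for the star graph `K_{1,n-1}`: no such graph has higher local leverage than the
star network. -/
theorem stmt18 {V : Type*} [Fintype V] (G : SimpleGraph V)
    (hn : 3 ≤ Fintype.card V) (hE : G.edgeSet.Nonempty) (hdeg : ∀ v : V, 1 ≤ deg G v) :
    localMean G / meanDeg G ≤
        (((Fintype.card V : ℝ) - 1) ^ 2 + 1) / (2 * ((Fintype.card V : ℝ) - 1)) ∧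
      ∀ n : ℕ, 3 ≤ n →
        localMean (starGraph n) / meanDeg (starGraph n)
          = (((n : ℝ) - 1) ^ 2 + 1) / (2 * ((n : ℝ) - 1)) :=
  stmt18_general G hn hdeg
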